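/- For λ > 0 and z > 0, the function r ↦ Φ(λ√r − z/√r) − exp(2λz)·Φ(−λ√r − z/√r), defined for r > 0, is equal to the cumulative distribution function t ↦ λ·∫_0^t p(r, z, λr) dr; i.e. for all t > 0, λ·∫_0^t p(r, z, λr) dr = Φ(λ√t − z/√t) − exp(2λz)·Φ(−λ√t − z/√t). -/

import Mathlib

/-!
Write the right-hand side at time `t` as `G (√t)` with
`G u = Φ(λu - z/u) - exp(2λz) Φ(-λu - z/u)`. The identity `exp(2λz) φ(-λu - z/u) = φ(λu - z/u)`
collapses `G' u` to `2λ φ(λu - z/u)`, hence `d/dt G (√t) = λ p(t, z, λt)`. As `u → 0⁺` both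
arguments of `Φ` tend to `-∞`, so `G (√t) → 0`, and the claim is the fundamental theorem of
calculus on `(0, t]`; the integrand is integrable there because `p(r, z, λr) ≤ (2πr)^(-1/2)`.
-/

open MeasureTheory Real intervalIntegral

/-- Gaussian density with variance `t` and mean `m`, evaluated at `x`. -/
noncomputable def gaussDensity (t x m : ℝ) : ℝ :=
  Real.exp (-(x - m) ^ 2 / (2 * t)) / Real.sqrt (2 * Real.pi * t)

/-- Standard normal cumulative distribution function. -/
noncomputable def Phi (x : ℝ) : ℝ :=
  ∫ u in Set.Iic x, Real.exp (-u ^ 2 / 2) / Real.sqrt (2 * Real.pi)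

open Set Filter Topology

section IntegralIic

variable {f : ℝ → ℝ}

theorem tendsto_integral_Iic_atBot {b : ℝ} (hf : IntegrableOn f (Iic b)) :
    Tendsto (fun x => ∫ u in Iic x, f u) atBot (𝓝 0) := by
  have hlim := (intervalIntegral_tendsto_integral_Iic b hf tendsto_id).const_sub
    (∫ u in Iic b, f u)
  rw [sub_self] at hlim
  refine hlim.congr' ?_
  filter_upwards [eventually_le_atBot b] with x hx
  rw [id, ← integral_Iic_sub_Iic (hf.mono_set (Iic_subset_Iic.2 hx)) hf, sub_sub_cancel]

theorem hasDerivAt_integral_Iic (hf : Integrable f) {x : ℝ} (hx : ContinuousAt f x) :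
    HasDerivAt (fun y => ∫ u in Iic y, f u) (f x) x := by
  have hsplit :
      (fun y => ∫ u in Iic y, f u) = fun y => (∫ u in Iic 0, f u) + ∫ u in 0..y, f u := by
    ext y
    rw [← integral_Iic_sub_Iic hf.integrableOn hf.integrableOn, add_sub_cancel]
  rw [hsplit]
  exact (integral_hasDerivAt_right hf.intervalIntegrable
    hf.aestronglyMeasurable.stronglyMeasurableAtFilter hx).const_add _

end IntegralIic

noncomputable def phi (u : ℝ) : ℝ := exp (-u ^ 2 / 2) / √(2 * π)

theorem continuous_phi : Continuous phi := by
  unfold phi; fun_prop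

theorem integrable_phi : Integrable phi := by
  have h := (integrable_exp_neg_mul_sq (b := 1 / 2) (by norm_num)).div_const √(2 * π)
  unfold phi
  convert h using 4
  ring

theorem hasDerivAt_Phi (x : ℝ) : HasDerivAt Phi (phi x) x :=
  hasDerivAt_integral_Iic integrable_phi continuous_phi.continuousAt

theorem tendsto_Phi_atBot : Tendsto Phi atBot (𝓝 0) :=
  tendsto_integral_Iic_atBot (b := 0) integrable_phi.integrableOn

theorem gaussDensity_nonneg (t x m : ℝ) : 0 ≤ gaussDensity t x m := by
  unfold gaussDensity; positivity

theorem gaussDensity_le {t : ℝ} (ht : 0 < t) (x m : ℝ) :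
    gaussDensity t x m ≤ (√(2 * π))⁻¹ * t ^ (-(1 / 2) : ℝ) := by
  have hexp : exp (-(x - m) ^ 2 / (2 * t)) ≤ 1 :=
    exp_le_one_iff.2 (div_nonpos_of_nonpos_of_nonneg (by nlinarith) (by positivity))
  unfold gaussDensity
  rw [rpow_neg ht.le, ← sqrt_eq_rpow, ← mul_inv, ← sqrt_mul (by positivity), div_eq_mul_inv]
  exact mul_le_of_le_one_left (by positivity) hexp

theorem intervalIntegrable_gaussDensity {m : ℝ → ℝ} (hm : Measurable m) (x : ℝ) {a b : ℝ}
    (ha : 0 ≤ a) (hb : 0 ≤ b) :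
    IntervalIntegrable (fun r => gaussDensity r x (m r)) volume a b := by
  refine ((intervalIntegrable_rpow' (by norm_num : (-1 : ℝ) < -(1 / 2))).const_mul
    (√(2 * π))⁻¹).mono_fun' ?_ ?_
  · exact (by unfold gaussDensity; fun_prop : Measurable _).aestronglyMeasurable
  · filter_upwards [ae_restrict_mem measurableSet_uIoc] with r hr
    have hr0 : 0 < r := (le_min ha hb).trans_lt hr.1
    rw [norm_of_nonneg (gaussDensity_nonneg _ _ _)]
    exact gaussDensity_le hr0 x (m r)

/-- The right-hand side of the theorem at time `u ^ 2`. -/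
noncomputable def lastPassageCDFSqrt (lam z u : ℝ) : ℝ :=
  Phi (lam * u - z / u) - exp (2 * lam * z) * Phi (-(lam * u) - z / u)

theorem exp_mul_phi_eq (lam z : ℝ) {u : ℝ} (hu : u ≠ 0) :
    exp (2 * lam * z) * phi (-(lam * u) - z / u) = phi (lam * u - z / u) := by
  unfold phi
  rw [← mul_div_assoc, ← exp_add]
  congr 2
  field_simp
  ring

theorem hasDerivAt_lastPassageCDFSqrt (lam z : ℝ) {u : ℝ} (hu : u ≠ 0) :
    HasDerivAt (lastPassageCDFSqrt lam z) (2 * lam * phi (lam * u - z / u)) u := by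
  have hdiv : HasDerivAt (fun v => z / v) (-(z / u ^ 2)) u := by
    simpa [div_eq_mul_inv] using (hasDerivAt_inv hu).const_mul z
  have ha : HasDerivAt (fun v => lam * v - z / v) (lam + z / u ^ 2) u := by
    simpa using ((hasDerivAt_id' u).const_mul lam).fun_sub hdiv
  have hb : HasDerivAt (fun v => -(lam * v) - z / v) (-lam + z / u ^ 2) u := by
    simpa using ((hasDerivAt_id' u).const_mul lam).fun_neg.fun_sub hdiv
  refine (((hasDerivAt_Phi _).comp u ha).sub
    (((hasDerivAt_Phi _).comp u hb).const_mul (exp (2 * lam * z)))).congr_deriv ?_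
  rw [← mul_assoc, exp_mul_phi_eq lam z hu]
  ring

theorem tendsto_mul_sub_div_nhdsGT_zero (c : ℝ) {z : ℝ} (hz : 0 < z) :
    Tendsto (fun u => c * u - z / u) (𝓝[>] 0) atBot := by
  have hlin : Tendsto (fun u : ℝ => c * u) (𝓝[>] 0) (𝓝 0) := by
    simpa using ((continuous_const_mul c).tendsto 0).mono_left nhdsWithin_le_nhds
  have hdiv : Tendsto (fun u : ℝ => z / u) (𝓝[>] 0) atTop := by
    simpa [div_eq_mul_inv] using tendsto_inv_nhdsGT_zero.const_mul_atTop hz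
  simpa [sub_eq_add_neg] using hlin.add_atBot (tendsto_neg_atTop_atBot.comp hdiv)

theorem tendsto_lastPassageCDFSqrt (lam : ℝ) {z : ℝ} (hz : 0 < z) :
    Tendsto (lastPassageCDFSqrt lam z) (𝓝[>] 0) (𝓝 0) := by
  have h := (tendsto_Phi_atBot.comp (tendsto_mul_sub_div_nhdsGT_zero lam hz)).sub
    ((tendsto_Phi_atBot.comp (tendsto_mul_sub_div_nhdsGT_zero (-lam) hz)).const_mul
      (exp (2 * lam * z)))
  simp only [Function.comp_def, neg_mul, mul_zero, sub_zero] at h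
  exact h

theorem phi_div_sqrt_eq_gaussDensity (lam z : ℝ) {t : ℝ} (ht : 0 < t) :
    phi (lam * √t - z / √t) / √t = gaussDensity t z (lam * t) := by
  have hsqrt : √t ≠ 0 := sqrt_ne_zero'.2 ht
  unfold phi gaussDensity
  rw [div_div, ← sqrt_mul (by positivity)]
  congr 2
  field_simp
  rw [sq_sqrt ht.le]
  ring

theorem hasDerivAt_lastPassageCDFSqrt_sqrt (lam z : ℝ) {t : ℝ} (ht : 0 < t) :
    HasDerivAt (fun s => lastPassageCDFSqrt lam z √s) (lam * gaussDensity t z (lam * t)) t := by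
  refine ((hasDerivAt_lastPassageCDFSqrt lam z (sqrt_ne_zero'.2 ht)).comp t
    (hasDerivAt_sqrt ht.ne')).congr_deriv ?_
  rw [← phi_div_sqrt_eq_gaussDensity lam z ht]
  field_simp

theorem tendsto_lastPassageCDFSqrt_sqrt (lam : ℝ) {z : ℝ} (hz : 0 < z) :
    Tendsto (fun s => lastPassageCDFSqrt lam z √s) (𝓝[>] 0) (𝓝 0) := by
  have hsqrt : Tendsto (√·) (𝓝[>] 0) (𝓝[>] 0) := by
    have h := continuous_sqrt.continuousWithinAt.tendsto_nhdsWithin (x := 0)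
      (fun s (hs : s ∈ Ioi 0) => sqrt_pos.2 hs)
    rwa [sqrt_zero] at h
  exact (tendsto_lastPassageCDFSqrt lam hz).comp hsqrt

theorem stmt_16_general (lam z : ℝ) (hz : 0 < z) :
    ∀ t : ℝ, 0 < t →
      lam * ∫ r in (0:ℝ)..t, gaussDensity r z (lam * r) =
        Phi (lam * Real.sqrt t - z / Real.sqrt t)
          - Real.exp (2 * lam * z) * Phi (-(lam * Real.sqrt t) - z / Real.sqrt t) := by
  intro t ht
  rw [← intervalIntegral.integral_const_mul, ← sub_zero (Phi _ - _)]
  exact integral_eq_sub_of_hasDerivAt_of_tendsto ht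
    (fun s hs => hasDerivAt_lastPassageCDFSqrt_sqrt lam z hs.1)
    ((intervalIntegrable_gaussDensity (measurable_const_mul lam) z le_rfl ht.le).const_mul lam)
    (tendsto_lastPassageCDFSqrt_sqrt lam hz)
    (hasDerivAt_lastPassageCDFSqrt_sqrt lam z ht).continuousAt.continuousWithinAt

theorem stmt_16 (lam z : ℝ) (hlam : 0 < lam) (hz : 0 < z) :
    ∀ t : ℝ, 0 < t →
      lam * ∫ r in (0:ℝ)..t, gaussDensity r z (lam * r) =
        Phi (lam * Real.sqrt t - z / Real.sqrt t)
          - Real.exp (2 * lam * z) * Phi (-(lam * Real.sqrt t) - z / Real.sqrt t) :=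
  stmt_16_general lam z hz
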